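/- arXiv:1207.1996 — 3 statements merged into one kernel-verified Lean document; each statement's English description precedes it below -/
import Mathlib

section
/- For all real numbers $x, y, w, z$ with $x \ge y$ and $w \ge z$, and all $p \in [1,\infty)$, one has $|y - z|^p + |x - w|^p \le |x - z|^p + |y - w|^p$. -/
/-!
Put `a = y - z`, `b = x - w`, `u = y - w`, `v = x - z`. Then `a + b = u + v` and both `a` and `b`
lie in `[u, v]`, so the pair `(u, v)` is more spread out than `(a, b)`. For a convex function `f`
this forces `f a + f b ≤ f u + f v`, and `t ↦ |t| ^ p` is convex for `p ≥ 1`.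
-/

open Set

theorem ConvexOn.map_add_map_le_of_mem_Icc {𝕜 β : Type*} [Field 𝕜] [LinearOrder 𝕜]
    [IsStrictOrderedRing 𝕜] [AddCommGroup β] [PartialOrder β] [IsOrderedAddMonoid β]
    [Module 𝕜 β] {s : Set 𝕜} {f : 𝕜 → β} (hf : ConvexOn 𝕜 s f) {u v a b : 𝕜} (hu : u ∈ s)
    (hv : v ∈ s) (ha : a ∈ Icc u v) (hb : b ∈ Icc u v) (hsum : a + b = u + v) :
    f a + f b ≤ f u + f v := by
  rcases (ha.1.trans ha.2).eq_or_lt with rfl | huv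
  · obtain rfl : a = u := le_antisymm ha.2 ha.1
    obtain rfl : b = a := le_antisymm hb.2 hb.1
    rfl
  set θ := (v - a) / (v - u)
  have hθ₀ : 0 ≤ θ := div_nonneg (sub_nonneg.2 ha.2) (sub_pos.2 huv).le
  have hθ₁ : θ ≤ 1 := (div_le_one (sub_pos.2 huv)).2 (by linarith [ha.1])
  have ha_comb : θ • u + (1 - θ) • v = a := by
    simp only [θ, smul_eq_mul]
    field_simp [(sub_pos.2 huv).ne']
    ring
  have hb_comb : (1 - θ) • u + θ • v = b := by
    simp only [smul_eq_mul] at ha_comb ⊢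
    linear_combination -hsum - ha_comb
  have hfa := hf.2 hu hv hθ₀ (sub_nonneg.2 hθ₁) (add_sub_cancel θ 1)
  have hfb := hf.2 hu hv (sub_nonneg.2 hθ₁) hθ₀ (sub_add_cancel 1 θ)
  rw [ha_comb] at hfa
  rw [hb_comb] at hfb
  calc f a + f b ≤ (θ • f u + (1 - θ) • f v) + ((1 - θ) • f u + θ • f v) := add_le_add hfa hfb
    _ = f u + f v := by module

theorem convexOn_norm_rpow {E : Type*} [SeminormedAddCommGroup E] [NormedSpace ℝ E] {p : ℝ}
    (hp : 1 ≤ p) : ConvexOn ℝ univ fun x : E => ‖x‖ ^ p := by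
  refine ⟨convex_univ, fun x _ y _ a b ha hb hab => ?_⟩
  calc ‖a • x + b • y‖ ^ p ≤ (a • ‖x‖ + b • ‖y‖) ^ p := by
        gcongr
        calc ‖a • x + b • y‖ ≤ ‖a • x‖ + ‖b • y‖ := norm_add_le _ _
          _ = a • ‖x‖ + b • ‖y‖ := by
            rw [norm_smul, norm_smul, Real.norm_of_nonneg ha, Real.norm_of_nonneg hb]
            rfl
    _ ≤ a • ‖x‖ ^ p + b • ‖y‖ ^ p :=
        (convexOn_rpow hp).2 (norm_nonneg x) (norm_nonneg y) ha hb hab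

/-- For all reals `x ≥ y`, `w ≥ z` and all `p ∈ [1,∞)`,
`|y-z|^p + |x-w|^p ≤ |x-z|^p + |y-w|^p`. -/
theorem stmt1 (x y w z p : ℝ) (hxy : y ≤ x) (hwz : z ≤ w) (hp : 1 ≤ p) :
    |y - z| ^ p + |x - w| ^ p ≤ |x - z| ^ p + |y - w| ^ p := by
  have h := (convexOn_norm_rpow (E := ℝ) hp).map_add_map_le_of_mem_Icc
    (mem_univ (y - w)) (mem_univ (x - z)) (a := y - z) (b := x - w)
    ⟨by linarith, by linarith⟩ ⟨by linarith, by linarith⟩ (by ring)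
  simp only [Real.norm_eq_abs] at h
  linarith
end

section
/- Let $G$ be a weighted graph with an almost equitable partition $V = \bigsqcup_{i \in I} V_i$ (with constants $c_{ij}$), where each cell has finite weighted size $|V_i|_d := \sum_{v \in V_i} d(v) < \infty$ and each cross-cell edge set has finite weight. Let $P$ be the cellwise averaging operator $Pf(v) := \frac{1}{|V_i|_d}\sum_{w \in V_i} f(w) d(w)$ for $v \in V_i$. Then for every $f$ in the form domain and every $p \in (1,\infty)$, the $p$-energy satisfies $\mathscr{E}_p(Pf) \le \mathscr{E}_p(f)$, where $\mathscr{E}_p(f) = \frac{1}{p}\sum_{e \in E} a(e) |f(e_+) - f(e_-)|^p$. -/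
/-!
Only edges joining two distinct cells contribute to `𝓔_p(Pf)`, so it suffices to compare the
two energies on the set of edges between cells `i ≠ j`. Counting these edges from their endpoints
in `V_i` (Fubini) gives `∑ a(e) g(e_i) = c_ij ∑_{V_i} g d`; hence their total weight is
`W = c_ij |V_i|_d = c_ji |V_j|_d` and `∑ a(e) (f(e_i) - f(e_j)) = W (Pf_i - Pf_j)`. Jensen's
inequality for `|·|^p` with weights `a(e) / W` then yields
`W |Pf_i - Pf_j|^p ≤ ∑ a(e) |f(e_i) - f(e_j)|^p`.
-/

open scoped ENNReal

namespace ENNReal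

theorem inner_le_Lp_mul_Lq_tsum {ι : Type*} (f g : ι → ℝ≥0∞) {p q : ℝ}
    (hpq : p.HolderConjugate q) :
    ∑' i, f i * g i ≤ (∑' i, f i ^ p) ^ (1 / p) * (∑' i, g i ^ q) ^ (1 / q) := by
  rw [ENNReal.tsum_eq_iSup_sum]
  refine iSup_le fun s => (inner_le_Lp_mul_Lq s f g hpq).trans ?_
  have := hpq.pos
  have := hpq.symm.pos
  gcongr <;> exact ENNReal.sum_le_tsum s

theorem rpow_tsum_mul_le {ι : Type*} (w x : ι → ℝ≥0∞) {p : ℝ} (hp : 1 < p) :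
    (∑' i, w i * x i) ^ p ≤ (∑' i, w i) ^ (p - 1) * ∑' i, w i * x i ^ p := by
  have hpq := Real.HolderConjugate.conjExponent hp
  set q := p.conjExponent
  have hp0 := hpq.pos
  have hq0 := hpq.symm.pos
  have hsplit : ∀ i, w i * x i = (w i ^ (1 / p) * x i) * w i ^ (1 / q) := fun i => by
    rw [mul_right_comm, ← rpow_add_of_nonneg _ _ (by positivity) (by positivity),
      one_div, one_div, hpq.inv_add_inv_eq_one, rpow_one]
  have hpow_p : ∀ i, (w i ^ (1 / p) * x i) ^ p = w i * x i ^ p := fun i => by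
    rw [mul_rpow_of_nonneg _ _ hp0.le, ← rpow_mul, one_div_mul_cancel hp0.ne', rpow_one]
  have hpow_q : ∀ i, (w i ^ (1 / q)) ^ q = w i := fun i => by
    rw [← rpow_mul, one_div_mul_cancel hq0.ne', rpow_one]
  have hholder :=
    inner_le_Lp_mul_Lq_tsum (fun i => w i ^ (1 / p) * x i) (fun i => w i ^ (1 / q)) hpq
  simp only [← hsplit, hpow_p, hpow_q] at hholder
  calc (∑' i, w i * x i) ^ p
      ≤ ((∑' i, w i * x i ^ p) ^ (1 / p) * (∑' i, w i) ^ (1 / q)) ^ p := by gcongr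
    _ = (∑' i, w i) ^ (p - 1) * ∑' i, w i * x i ^ p := by
      rw [mul_rpow_of_nonneg _ _ hp0.le, ← rpow_mul, ← rpow_mul, one_div_mul_cancel hp0.ne',
        rpow_one, mul_comm, one_div, ← div_eq_inv_mul, hpq.div_conj_eq_sub_one]

theorem mul_rpow_le_tsum_mul_rpow {ι : Type*} {w x : ι → ℝ≥0∞} {M : ℝ≥0∞} {p : ℝ} (hp : 1 < p)
    (hW : ∑' i, w i ≠ ∞) (hM : (∑' i, w i) * M ≤ ∑' i, w i * x i) :
    (∑' i, w i) * M ^ p ≤ ∑' i, w i * x i ^ p := by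
  set W := ∑' i, w i
  rcases eq_or_ne W 0 with hW0 | hW0
  · rw [hW0, zero_mul]
    exact zero_le
  have hWp : W ^ (p - 1) ≠ 0 := (rpow_pos (pos_iff_ne_zero.2 hW0) hW).ne'
  refine (ENNReal.mul_le_mul_iff_right hWp (rpow_ne_top_of_nonneg (by linarith) hW)).1 ?_
  calc W ^ (p - 1) * (W * M ^ p) = (W * M) ^ p := by
        rw [← mul_assoc, mul_rpow_of_nonneg _ _ (by linarith)]
        congr 1
        conv_rhs => rw [← sub_add_cancel p 1, rpow_add _ _ hW0 hW, rpow_one]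
    _ ≤ (∑' i, w i * x i) ^ p := by gcongr
    _ ≤ W ^ (p - 1) * ∑' i, w i * x i ^ p := rpow_tsum_mul_le w x hp

theorem ofReal_mul_abs_rpow {a : ℝ} (ha : 0 ≤ a) (x : ℝ) {p : ℝ} (hp : 0 ≤ p) :
    ENNReal.ofReal (a * |x| ^ p) = ENNReal.ofReal a * ‖x‖ₑ ^ p := by
  rw [ENNReal.ofReal_mul ha, ← ofReal_rpow_of_nonneg (abs_nonneg x) hp,
    Real.enorm_eq_ofReal_abs]

end ENNReal

theorem hasSum_mul_comp_of_hasSum_fiber {α β : Type*} {π : α → β} {w : α → ℝ}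
    (hw : ∀ x, 0 ≤ w x) {W : β → ℝ} (hW : ∀ b, HasSum (fun x : π ⁻¹' {b} => w x) (W b))
    {g : β → ℝ} (hg : Summable fun b => W b * |g b|) :
    HasSum (fun x => w x * g (π x)) (∑' b, W b * g b) := by
  have hfiber : ∀ (φ : β → ℝ) b, HasSum (fun x : π ⁻¹' {b} => w x * φ (π x)) (W b * φ b) :=
    fun φ b => by
      have hconst : ∀ x : π ⁻¹' {b}, w x * φ (π x) = w x * φ b := fun x => by
        rw [show π x = b from x.2]
      simpa only [hconst] using (hW b).mul_right (φ b)
  have habs : Summable fun x => w x * |g (π x)| := by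
    have hpart := summable_partition (f := fun x => w x * |g (π x)|)
      (fun x => mul_nonneg (hw x) (abs_nonneg _)) (s := fun b => π ⁻¹' {b})
      fun x => ⟨π x, Set.mem_singleton _, fun b hb => (Set.mem_singleton_iff.1 hb).symm⟩
    refine hpart.2 ⟨fun b => (hfiber (|g ·|) b).summable, ?_⟩
    simpa only [(hfiber (|g ·|) _).tsum_eq] using hg
  have hsum : Summable fun x => w x * g (π x) :=
    habs.of_norm_bounded fun x => by rw [norm_mul, Real.norm_of_nonneg (hw x), Real.norm_eq_abs]
  have hfibersum := hsum.hasSum.tsum_fiberwise π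
  simp only [(hfiber g _).tsum_eq] at hfibersum
  rw [hfibersum.tsum_eq]
  exact hsum.hasSum

theorem summable_abs_mul_of_summable_mul_sq {ι : Type*} {d f : ι → ℝ} (hd : ∀ i, 0 ≤ d i)
    (hd1 : Summable d) (hf : Summable fun i => d i * f i ^ 2) :
    Summable fun i => |f i| * d i := by
  refine Summable.of_nonneg_of_le (fun i => mul_nonneg (abs_nonneg _) (hd i)) (fun i => ?_)
    ((hd1.add hf).div_const 2)
  have h := mul_nonneg (hd i) (sq_nonneg (|f i| - 1))
  rw [sub_sq, sq_abs] at h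
  linarith

noncomputable section CellPartition

variable {V E I : Type*} (ep em : E → V) (cell : V → I)

def cellPair (e : E) : Sym2 I := s(cell (ep e), cell (em e))

def edgesBetween (i j : I) : Set E := cellPair ep em cell ⁻¹' {s(i, j)}

open Classical in
def endIn (i : I) (e : E) : V := if cell (ep e) = i then ep e else em e

def incidentWeight (a : E → ℝ) (v : V) (j : I) : ℝ :=
  ∑' e : {e : E // (ep e = v ∧ cell (em e) = j) ∨ (em e = v ∧ cell (ep e) = j)}, a e

def cellMean (d f : V → ℝ) (k : I) : ℝ :=
  (∑' w : {w : V // cell w = k}, f w * d w) / ∑' w : {w : V // cell w = k}, d w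

variable {ep em cell} {i j : I} {e : E}

theorem mem_edgesBetween : e ∈ edgesBetween ep em cell i j ↔
    (cell (ep e) = i ∧ cell (em e) = j) ∨ (cell (ep e) = j ∧ cell (em e) = i) :=
  Sym2.eq_iff

theorem edgesBetween_comm : edgesBetween ep em cell j i = edgesBetween ep em cell i j := by
  simp only [edgesBetween, Sym2.eq_swap]

theorem cell_endIn (hij : i ≠ j) (he : e ∈ edgesBetween ep em cell i j) :
    cell (endIn ep em cell i e) = i := by
  rcases mem_edgesBetween.1 he with ⟨h1, h2⟩ | ⟨h1, h2⟩ <;> simp [endIn, *, Ne.symm hij]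

theorem endIn_eq_iff (hij : i ≠ j) (he : e ∈ edgesBetween ep em cell i j) {v : V} :
    endIn ep em cell i e = v ↔
      (ep e = v ∧ cell (em e) = j) ∨ (em e = v ∧ cell (ep e) = j) := by
  rcases mem_edgesBetween.1 he with ⟨h1, h2⟩ | ⟨h1, h2⟩
  · simp [endIn, h1, h2, hij]
  · simp [endIn, h1, h2, hij, Ne.symm hij]

theorem mem_edgesBetween_of_incident {v : V} (hv : cell v = i)
    (he : (ep e = v ∧ cell (em e) = j) ∨ (em e = v ∧ cell (ep e) = j)) :
    e ∈ edgesBetween ep em cell i j := by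
  rcases he with ⟨rfl, h⟩ | ⟨rfl, h⟩
  · exact mem_edgesBetween.2 (.inl ⟨hv, h⟩)
  · exact mem_edgesBetween.2 (.inr ⟨h, hv⟩)

theorem abs_sub_endIn (hij : i ≠ j) (he : e ∈ edgesBetween ep em cell i j) (f : V → ℝ) :
    |f (ep e) - f (em e)| = |f (endIn ep em cell i e) - f (endIn ep em cell j e)| := by
  rcases mem_edgesBetween.1 he with ⟨h1, h2⟩ | ⟨h1, h2⟩
  · simp [endIn, *]
  · simp [endIn, *, Ne.symm hij, abs_sub_comm]

theorem abs_sub_comp_cell_of_mem_edgesBetween (he : e ∈ edgesBetween ep em cell i j)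
    (φ : I → ℝ) : |φ (cell (ep e)) - φ (cell (em e))| = |φ i - φ j| := by
  rcases mem_edgesBetween.1 he with ⟨h1, h2⟩ | ⟨h1, h2⟩
  · rw [h1, h2]
  · rw [h1, h2, abs_sub_comm]

theorem summable_edgesBetween (hij : i ≠ j) {a : E → ℝ}
    (hij_sum : Summable fun e : {e : E // cell (ep e) = i ∧ cell (em e) = j} => a e)
    (hji_sum : Summable fun e : {e : E // cell (ep e) = j ∧ cell (em e) = i} => a e) :
    Summable fun e : edgesBetween ep em cell i j => a e := by
  have hdisj : Disjoint {e : E | cell (ep e) = i ∧ cell (em e) = j}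
      {e : E | cell (ep e) = j ∧ cell (em e) = i} :=
    Set.disjoint_left.2 fun e h1 h2 => hij (h1.1.symm.trans h2.1)
  have hunion : edgesBetween ep em cell i j =
      {e : E | cell (ep e) = i ∧ cell (em e) = j} ∪ {e : E | cell (ep e) = j ∧ cell (em e) = i} :=
    Set.ext fun e => mem_edgesBetween
  rw [hunion]
  exact (hij_sum.hasSum.add_disjoint hdisj hji_sum.hasSum).summable

theorem hasSum_edgesBetween_mul_endIn (hij : i ≠ j) {a : E → ℝ} (ha : ∀ e, 0 ≤ a e)
    (hsum : Summable fun e : edgesBetween ep em cell i j => a e) {c : ℝ} {d : V → ℝ}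
    (hc : ∀ v, cell v = i → incidentWeight ep em cell a v j = c * d v) {g : V → ℝ}
    (hg : Summable fun v : {v : V // cell v = i} => |g v| * d v) :
    HasSum (fun e : edgesBetween ep em cell i j => a e * g (endIn ep em cell i e))
      (c * ∑' v : {v : V // cell v = i}, g v * d v) := by
  let π : edgesBetween ep em cell i j → {v : V // cell v = i} :=
    fun e => ⟨endIn ep em cell i e, cell_endIn hij e.2⟩
  have hfiber : ∀ v, HasSum (fun e : π ⁻¹' {v} => a e) (c * d v) := fun v => by
    let fiberEquiv : π ⁻¹' {v} ≃
        {e : E // (ep e = v ∧ cell (em e) = j) ∨ (em e = v ∧ cell (ep e) = j)} :=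
      (Equiv.subtypeEquivRight fun e => Subtype.ext_iff.trans (endIn_eq_iff hij e.2)).trans
        (Equiv.subtypeSubtypeEquivSubtype (mem_edgesBetween_of_incident v.2))
    have hsummable : Summable fun e :
        {e : E // (ep e = v ∧ cell (em e) = j) ∨ (em e = v ∧ cell (ep e) = j)} => a e :=
      fiberEquiv.summable_iff.1 (hsum.subtype _)
    rw [← hc v v.2]
    exact fiberEquiv.hasSum_iff.2 hsummable.hasSum
  have hg' : Summable fun v : {v : V // cell v = i} => c * d v * |g v| :=
    (hg.mul_left c).congr fun v => by ring
  convert hasSum_mul_comp_of_hasSum_fiber (π := π) (fun e => ha e) hfiber hg' using 1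
  rw [← tsum_mul_left]
  exact tsum_congr fun v => by ring

theorem hasSum_edgesBetween_mul_sub_endIn (hij : i ≠ j) {a : E → ℝ} (ha : ∀ e, 0 < a e)
    (hsum : Summable fun e : edgesBetween ep em cell i j => a e) {c c' : ℝ} {d f : V → ℝ}
    (hc : ∀ v, cell v = i → incidentWeight ep em cell a v j = c * d v)
    (hc' : ∀ v, cell v = j → incidentWeight ep em cell a v i = c' * d v)
    (hdi : Summable fun v : {v : V // cell v = i} => d v)
    (hdj : Summable fun v : {v : V // cell v = j} => d v)
    (hfi : Summable fun v : {v : V // cell v = i} => |f v| * d v)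
    (hfj : Summable fun v : {v : V // cell v = j} => |f v| * d v) :
    HasSum (fun e : edgesBetween ep em cell i j =>
        a e * (f (endIn ep em cell i e) - f (endIn ep em cell j e)))
      ((∑' e : edgesBetween ep em cell i j, a e) *
        (cellMean cell d f i - cellMean cell d f j)) := by
  rcases isEmpty_or_nonempty (edgesBetween ep em cell i j) with hempty | hne
  · rw [tsum_empty, zero_mul]
    exact hasSum_empty
  obtain ⟨e₀⟩ := hne
  have fubini_i : ∀ g : V → ℝ, Summable (fun v : {v : V // cell v = i} => |g v| * d v) →
      HasSum (fun e : edgesBetween ep em cell i j => a e * g (endIn ep em cell i e))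
        (c * ∑' v : {v : V // cell v = i}, g v * d v) :=
    fun g => hasSum_edgesBetween_mul_endIn hij (fun e => (ha e).le) hsum hc
  have fubini_j : ∀ g : V → ℝ, Summable (fun v : {v : V // cell v = j} => |g v| * d v) →
      HasSum (fun e : edgesBetween ep em cell i j => a e * g (endIn ep em cell j e))
        (c' * ∑' v : {v : V // cell v = j}, g v * d v) := fun g hg => by
    rw [← edgesBetween_comm] at hsum ⊢
    exact hasSum_edgesBetween_mul_endIn (Ne.symm hij) (fun e => (ha e).le) hsum hc' hg
  have hWi := (fubini_i (fun _ => 1) (by simpa using hdi)).tsum_eq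
  have hWj := (fubini_j (fun _ => 1) (by simpa using hdj)).tsum_eq
  simp only [mul_one, one_mul] at hWi hWj
  -- One edge makes `W > 0`, so both cells have positive size and the means are genuine quotients.
  have hW0 : 0 < ∑' e : edgesBetween ep em cell i j, a e :=
    (ha e₀).trans_le (le_hasSum hsum.hasSum e₀ fun e _ => (ha e).le)
  have hDi : ∑' v : {v : V // cell v = i}, d v ≠ 0 := by
    rintro h
    rw [h, mul_zero] at hWi
    exact hW0.ne' hWi
  have hDj : ∑' v : {v : V // cell v = j}, d v ≠ 0 := by
    rintro h
    rw [h, mul_zero] at hWj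
    exact hW0.ne' hWj
  have hmeans : (∑' e : edgesBetween ep em cell i j, a e) *
      (cellMean cell d f i - cellMean cell d f j) =
      c * (∑' v : {v : V // cell v = i}, f v * d v) -
        c' * ∑' v : {v : V // cell v = j}, f v * d v := by
    rw [cellMean, cellMean, mul_sub]
    congr 1
    · rw [hWi]
      field_simp
    · rw [hWj]
      field_simp
  rw [hmeans]
  simpa only [mul_sub] using (fubini_i f hfi).sub (fubini_j f hfj)

theorem tsum_edgesBetween_energy_cellMean_le (hij : i ≠ j) {a : E → ℝ} (ha : ∀ e, 0 < a e)
    (hsum : Summable fun e : edgesBetween ep em cell i j => a e) {c c' : ℝ} {d f : V → ℝ}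
    (hc : ∀ v, cell v = i → incidentWeight ep em cell a v j = c * d v)
    (hc' : ∀ v, cell v = j → incidentWeight ep em cell a v i = c' * d v)
    (hdi : Summable fun v : {v : V // cell v = i} => d v)
    (hdj : Summable fun v : {v : V // cell v = j} => d v)
    (hfi : Summable fun v : {v : V // cell v = i} => |f v| * d v)
    (hfj : Summable fun v : {v : V // cell v = j} => |f v| * d v) {p : ℝ} (hp : 1 < p) :
    ∑' e : edgesBetween ep em cell i j,
        ENNReal.ofReal (a e * |cellMean cell d f i - cellMean cell d f j| ^ p)
      ≤ ∑' e : edgesBetween ep em cell i j, ENNReal.ofReal (a e * |f (ep e) - f (em e)| ^ p) := by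
  have hp0 : 0 ≤ p := by linarith
  set u : edgesBetween ep em cell i j → ℝ :=
    fun e => f (endIn ep em cell i e) - f (endIn ep em cell j e)
  have hW : ∑' e : edgesBetween ep em cell i j, ENNReal.ofReal (a e) =
      ENNReal.ofReal (∑' e : edgesBetween ep em cell i j, a e) :=
    (ENNReal.ofReal_tsum_of_nonneg (f := fun e : edgesBetween ep em cell i j => a e)
      (fun e => (ha e).le) hsum).symm
  have hmean_le : (∑' e : edgesBetween ep em cell i j, ENNReal.ofReal (a e)) *
      ‖cellMean cell d f i - cellMean cell d f j‖ₑ ≤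
        ∑' e : edgesBetween ep em cell i j, ENNReal.ofReal (a e) * ‖u e‖ₑ := by
    calc (∑' e : edgesBetween ep em cell i j, ENNReal.ofReal (a e)) *
          ‖cellMean cell d f i - cellMean cell d f j‖ₑ
        = ‖(∑' e : edgesBetween ep em cell i j, a e) *
            (cellMean cell d f i - cellMean cell d f j)‖ₑ := by
          rw [hW, enorm_mul, Real.enorm_of_nonneg
            (tsum_nonneg fun e : edgesBetween ep em cell i j => (ha e).le)]
      _ = ‖∑' e : edgesBetween ep em cell i j, a e * u e‖ₑ := by
          rw [(hasSum_edgesBetween_mul_sub_endIn hij ha hsum hc hc' hdi hdj hfi hfj).tsum_eq]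
      _ ≤ ∑' e : edgesBetween ep em cell i j, ‖a e * u e‖ₑ := enorm_tsum_le_tsum_enorm
      _ = _ := tsum_congr fun e => by rw [enorm_mul, Real.enorm_of_nonneg (ha e).le]
  calc _ = (∑' e : edgesBetween ep em cell i j, ENNReal.ofReal (a e)) *
        ‖cellMean cell d f i - cellMean cell d f j‖ₑ ^ p := by
        simp only [ENNReal.ofReal_mul_abs_rpow (ha _).le _ hp0, ENNReal.tsum_mul_right]
    _ ≤ ∑' e : edgesBetween ep em cell i j, ENNReal.ofReal (a e) * ‖u e‖ₑ ^ p :=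
        ENNReal.mul_rpow_le_tsum_mul_rpow hp (hW ▸ ENNReal.ofReal_ne_top) hmean_le
    _ = _ := tsum_congr fun e => by
        rw [abs_sub_endIn hij e.2 f, ENNReal.ofReal_mul_abs_rpow (ha e).le _ hp0]

theorem tsum_preimage_cellPair_energy_cellMean_le {a : E → ℝ} (ha : ∀ e, 0 < a e) {d : V → ℝ}
    (hd : ∀ v, 0 ≤ d v)
    (halmost : ∀ i j : I, i ≠ j → ∃ c : ℝ, ∀ v : V, cell v = i →
      incidentWeight ep em cell a v j = c * d v)
    (hcellfin : ∀ i : I, Summable fun v : {v : V // cell v = i} => d v)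
    (hedgefin : ∀ i j : I,
      Summable fun e : {e : E // cell (ep e) = i ∧ cell (em e) = j} => a e)
    {f : V → ℝ} (hf2 : Summable fun v => d v * f v ^ 2) {p : ℝ} (hp : 1 < p) (z : Sym2 I) :
    ∑' e : cellPair ep em cell ⁻¹' {z}, ENNReal.ofReal
        (a e * |cellMean cell d f (cell (ep e)) - cellMean cell d f (cell (em e))| ^ p)
      ≤ ∑' e : cellPair ep em cell ⁻¹' {z}, ENNReal.ofReal (a e * |f (ep e) - f (em e)| ^ p) := by
  induction z using Sym2.ind with | h i j => ?_
  change ∑' e : edgesBetween ep em cell i j, _ ≤ ∑' e : edgesBetween ep em cell i j, _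
  simp only [fun e : edgesBetween ep em cell i j =>
    abs_sub_comp_cell_of_mem_edgesBetween e.2 (cellMean cell d f)]
  rcases eq_or_ne i j with rfl | hij
  · simp only [sub_self, abs_zero, Real.zero_rpow (by linarith : p ≠ 0), mul_zero,
      ENNReal.ofReal_zero, tsum_zero]
    exact zero_le
  obtain ⟨c, hc⟩ := halmost i j hij
  obtain ⟨c', hc'⟩ := halmost j i hij.symm
  have hf1 : ∀ k, Summable fun v : {v : V // cell v = k} => |f v| * d v := fun k =>
    summable_abs_mul_of_summable_mul_sq (fun v => hd v) (hcellfin k) (hf2.subtype _)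
  exact tsum_edgesBetween_energy_cellMean_le hij ha
    (summable_edgesBetween hij (hedgefin i j) (hedgefin j i)) hc hc' (hcellfin i) (hcellfin j)
    (hf1 i) (hf1 j) hp

end CellPartition

theorem stmt7_general (V E I : Type*)
    (ep em : E → V)
    (a : E → ℝ) (ha : ∀ e, 0 < a e) (d : V → ℝ) (hd : ∀ v, 0 < d v)
    (cell : V → I)
    (halmost : ∀ i j : I, i ≠ j → ∃ c : ℝ, 0 ≤ c ∧ ∀ v : V, cell v = i →
      (∑' e : {e : E // (ep e = v ∧ cell (em e) = j) ∨ (em e = v ∧ cell (ep e) = j)}, a e.1)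
        = c * d v)
    (hcellfin : ∀ i : I, Summable (fun v : {v : V // cell v = i} => d v.1))
    (hedgefin : ∀ i j : I,
      Summable (fun e : {e : E // cell (ep e) = i ∧ cell (em e) = j} => a e.1))
    (p : ℝ) (hp : 1 < p)
    (f : V → ℝ) (hf2 : Summable (fun v => d v * (f v) ^ 2)) :
    let P : V → ℝ := fun v =>
      (∑' w : {w : V // cell w = cell v}, f w.1 * d w.1) /
        (∑' w : {w : V // cell w = cell v}, d w.1)
    ENNReal.ofReal (1 / p) * ∑' e : E, ENNReal.ofReal (a e * |P (ep e) - P (em e)| ^ p)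
      ≤ ENNReal.ofReal (1 / p) *
          ∑' e : E, ENNReal.ofReal (a e * |f (ep e) - f (em e)| ^ p) := by
  intro P
  gcongr ENNReal.ofReal (1 / p) * ?_
  calc ∑' e : E, ENNReal.ofReal (a e * |P (ep e) - P (em e)| ^ p)
      = ∑' z, ∑' e : cellPair ep em cell ⁻¹' {z},
          ENNReal.ofReal (a e * |P (ep e) - P (em e)| ^ p) :=
        (ENNReal.tsum_fiberwise _ _).symm
    _ ≤ ∑' z, ∑' e : cellPair ep em cell ⁻¹' {z},
          ENNReal.ofReal (a e * |f (ep e) - f (em e)| ^ p) :=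
        ENNReal.tsum_le_tsum fun z =>
          tsum_preimage_cellPair_energy_cellMean_le ha (fun v => (hd v).le)
            (fun i j hij => (halmost i j hij).imp fun _ hc => hc.2) hcellfin hedgefin hf2 hp z
    _ = ∑' e : E, ENNReal.ofReal (a e * |f (ep e) - f (em e)| ^ p) :=
        ENNReal.tsum_fiberwise (fun e => ENNReal.ofReal (a e * |f (ep e) - f (em e)| ^ p)) _

/-- For an almost equitable partition with cells of finite weighted size and cross-cell
edge sets of finite weight, the cellwise averaging operator `P` does not increase the
`p`-energy: `𝓔_p(Pf) ≤ 𝓔_p(f)`. -/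
theorem stmt7 (V E I : Type*) [Countable V] [Countable E]
    (ep em : E → V) (hne : ∀ e, ep e ≠ em e)
    (a : E → ℝ) (ha : ∀ e, 0 < a e) (d : V → ℝ) (hd : ∀ v, 0 < d v)
    (cell : V → I)
    (halmost : ∀ i j : I, i ≠ j → ∃ c : ℝ, 0 ≤ c ∧ ∀ v : V, cell v = i →
      (∑' e : {e : E // (ep e = v ∧ cell (em e) = j) ∨ (em e = v ∧ cell (ep e) = j)}, a e.1)
        = c * d v)
    (hcellfin : ∀ i : I, Summable (fun v : {v : V // cell v = i} => d v.1))
    (hedgefin : ∀ i j : I,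
      Summable (fun e : {e : E // cell (ep e) = i ∧ cell (em e) = j} => a e.1))
    (p : ℝ) (hp : 1 < p)
    (f : V → ℝ) (hf2 : Summable (fun v => d v * (f v) ^ 2))
    (hfE : Summable (fun e => a e * |f (ep e) - f (em e)| ^ p)) :
    let P : V → ℝ := fun v =>
      (∑' w : {w : V // cell w = cell v}, f w.1 * d w.1) /
        (∑' w : {w : V // cell w = cell v}, d w.1)
    ENNReal.ofReal (1 / p) * ∑' e : E, ENNReal.ofReal (a e * |P (ep e) - P (em e)| ^ p)
      ≤ ENNReal.ofReal (1 / p) *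
          ∑' e : E, ENNReal.ofReal (a e * |f (ep e) - f (em e)| ^ p) :=
  stmt7_general V E I ep em a ha d hd cell halmost hcellfin hedgefin p hp f hf2
end

section
/- Let $G$ be an $(r,s)$-semiregular bipartite finite graph with parts $V_1, V_2$ (every node in $V_1$ has degree $r$, every node in $V_2$ has degree $s$), oriented so that every edge goes from $V_1$ to $V_2$. Then $\mathcal{I}^T \mathcal{I} = (r+s)\,\mathrm{Id} - \Delta_{G_L}$, where $\Delta_{G_L}$ is the discrete Laplacian of the line graph $G_L$ of $G$. -/
/-!
Column `e` of the incidence matrix is `δ_{ep e} - δ_{em e}`, so the `(e, f)` entry of `𝓘ᵀ 𝓘`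
is `[ep e = ep f] - [ep e = em f] - [em e = ep f] + [em e = em f]`. When every edge runs from
`P` to its complement the two mixed terms vanish: the diagonal entries are `2`, and an
off-diagonal entry is `1` exactly when `e` and `f` share an endpoint (they cannot share both,
the graph being simple), i.e. it is the entry of `A_L`. Finally the line-graph degree of `e` is
`deg (ep e) + deg (em e) - 2 = r + s - 2`, so `(r + s) - D_L` is `2` on the diagonal.
-/

open Finset

namespace OrientedGraph

variable {V E : Type*} [DecidableEq V] (ep em : E → V)

def incidence : Matrix V E ℝ := fun v e => if ep e = v then 1 else if em e = v then -1 else 0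

def edgesAt [Fintype E] (v : V) : Finset E := univ.filter fun e => ep e = v ∨ em e = v

def lineNeighbors [Fintype E] [DecidableEq E] (e : E) : Finset E :=
  univ.filter fun f => e ≠ f ∧ (ep e = ep f ∨ ep e = em f ∨ em e = ep f ∨ em e = em f)

variable {ep em}

theorem incidence_col {e : E} (he : ep e ≠ em e) :
    (fun v => incidence ep em v e) = Pi.single (ep e) 1 - Pi.single (em e) 1 := by
  ext v
  by_cases hp : v = ep e
  · subst hp; simp [incidence, he.symm]
  · by_cases hm : v = em e
    · subst hm; simp [incidence, he]
    · simp [incidence, hp, hm, Ne.symm hp, Ne.symm hm]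

theorem transpose_incidence_mul_incidence_apply [Fintype V] {e f : E}
    (he : ep e ≠ em e) (hf : ep f ≠ em f) :
    ((incidence ep em).transpose * incidence ep em) e f =
      (if ep e = ep f then 1 else 0) - (if ep e = em f then 1 else 0) -
        (if em e = ep f then 1 else 0) + (if em e = em f then 1 else 0) := by
  rw [Matrix.mul_apply']
  change (fun v => incidence ep em v e) ⬝ᵥ (fun v => incidence ep em v f) = _
  rw [incidence_col he, incidence_col hf]
  simp only [sub_dotProduct, dotProduct_sub, single_dotProduct, Pi.single_apply, one_mul]
  ring

variable [Fintype E] [DecidableEq E]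

theorem lineNeighbors_eq_union (e : E) :
    lineNeighbors ep em e = (edgesAt ep em (ep e)).erase e ∪ (edgesAt ep em (em e)).erase e := by
  ext f
  simp only [lineNeighbors, edgesAt, mem_filter, mem_univ, true_and, mem_union, mem_erase]
  grind

theorem card_lineNeighbors_add_two (hpm : ∀ e f, ep e ≠ em f)
    (hsimple : ∀ e f, ep e = ep f → em e = em f → e = f) (e : E) :
    #(lineNeighbors ep em e) + 2 = #(edgesAt ep em (ep e)) + #(edgesAt ep em (em e)) := by
  have hdisj : Disjoint ((edgesAt ep em (ep e)).erase e) ((edgesAt ep em (em e)).erase e) := by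
    rw [disjoint_left]
    simp only [edgesAt, mem_erase, mem_filter, mem_univ, true_and]
    rintro f ⟨hfe, hp | hp⟩ ⟨-, hm | hm⟩
    · exact hpm e e (hp.symm.trans hm)
    · exact hfe (hsimple f e hp hm)
    all_goals exact hpm e f hp.symm
  have hp : e ∈ edgesAt ep em (ep e) := by simp [edgesAt]
  have hm : e ∈ edgesAt ep em (em e) := by simp [edgesAt]
  rw [lineNeighbors_eq_union, card_union_of_disjoint hdisj, card_erase_of_mem hp,
    card_erase_of_mem hm]
  have := card_pos.mpr ⟨e, hp⟩
  have := card_pos.mpr ⟨e, hm⟩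
  omega

end OrientedGraph

open OrientedGraph in
theorem stmt13_general (V E : Type*) [Fintype V] [Fintype E] [DecidableEq V] [DecidableEq E]
    (ep em : E → V)
    (P : V → Prop)
    (hbip : ∀ e, P (ep e) ∧ ¬ P (em e))
    (hsimple : ∀ e f : E, ep e = ep f → em e = em f → e = f)
    (r s : ℕ)
    (hr : ∀ v, P v → (Finset.univ.filter (fun e : E => ep e = v ∨ em e = v)).card = r)
    (hs : ∀ v, ¬ P v → (Finset.univ.filter (fun e : E => ep e = v ∨ em e = v)).card = s) :
    let Inc : Matrix V E ℝ := fun v e => if ep e = v then 1 else if em e = v then -1 else 0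
    let AL : Matrix E E ℝ := fun e f =>
      if e ≠ f ∧ (ep e = ep f ∨ ep e = em f ∨ em e = ep f ∨ em e = em f) then 1 else 0
    let DL : E → ℝ := fun e => ((Finset.univ.filter (fun f : E =>
      e ≠ f ∧ (ep e = ep f ∨ ep e = em f ∨ em e = ep f ∨ em e = em f))).card : ℝ)
    Inc.transpose * Inc
      = ((r + s : ℝ) • (1 : Matrix E E ℝ)) - (Matrix.diagonal DL - AL) := by
  intro Inc AL DL
  have hpm : ∀ e f, ep e ≠ em f := fun e f h => (hbip f).2 (h ▸ (hbip e).1)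
  have hdeg (e : E) : DL e + 2 = r + s := by
    have h := card_lineNeighbors_add_two hpm hsimple e
    rw [edgesAt, edgesAt, hr _ (hbip e).1, hs _ (hbip e).2] at h
    change (#(lineNeighbors ep em e) : ℝ) + 2 = r + s
    exact_mod_cast h
  ext e f
  change ((incidence ep em).transpose * incidence ep em) e f = _
  rw [transpose_incidence_mul_incidence_apply (hpm e e) (hpm f f)]
  simp only [hpm, hpm f e |>.symm, if_false, sub_zero]
  by_cases hef : e = f
  · subst hef
    have hAL : AL e e = 0 := if_neg fun h => h.1 rfl
    rw [Matrix.sub_apply, Matrix.sub_apply, Matrix.smul_apply, Matrix.one_apply_eq,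
      Matrix.diagonal_apply_eq, hAL, if_pos rfl, if_pos rfl, smul_eq_mul, mul_one]
    linarith [hdeg e]
  · rw [Matrix.sub_apply, Matrix.sub_apply, Matrix.smul_apply, Matrix.one_apply_ne hef,
      Matrix.diagonal_apply_ne _ hef]
    simp only [AL, ne_eq, hef, not_false_eq_true, true_and, hpm, (hpm f e).symm,
      false_or, smul_zero, zero_sub, sub_neg_eq_add, zero_add]
    have hnot : ¬ (ep e = ep f ∧ em e = em f) := fun h => hef (hsimple e f h.1 h.2)
    by_cases hp : ep e = ep f <;> by_cases hm : em e = em f <;> simp_all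

/-- For an `(r,s)`-semiregular bipartite finite simple graph oriented from part `P`
to its complement, `𝓘ᵀ 𝓘 = (r+s)·Id - Δ_{G_L}`, where `Δ_{G_L} = D_L - A_L` is the
discrete Laplacian of the line graph. -/
theorem stmt13 (V E : Type*) [Fintype V] [Fintype E] [DecidableEq V] [DecidableEq E]
    (ep em : E → V)
    (P : V → Prop) [DecidablePred P]
    (hbip : ∀ e, P (ep e) ∧ ¬ P (em e))
    (hsimple : ∀ e f : E, ep e = ep f → em e = em f → e = f)
    (r s : ℕ)
    (hr : ∀ v, P v → (Finset.univ.filter (fun e : E => ep e = v ∨ em e = v)).card = r)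
    (hs : ∀ v, ¬ P v → (Finset.univ.filter (fun e : E => ep e = v ∨ em e = v)).card = s) :
    let Inc : Matrix V E ℝ := fun v e => if ep e = v then 1 else if em e = v then -1 else 0
    let AL : Matrix E E ℝ := fun e f =>
      if e ≠ f ∧ (ep e = ep f ∨ ep e = em f ∨ em e = ep f ∨ em e = em f) then 1 else 0
    let DL : E → ℝ := fun e => ((Finset.univ.filter (fun f : E =>
      e ≠ f ∧ (ep e = ep f ∨ ep e = em f ∨ em e = ep f ∨ em e = em f))).card : ℝ)
    Inc.transpose * Inc
      = ((r + s : ℝ) • (1 : Matrix E E ℝ)) - (Matrix.diagonal DL - AL) :=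
  stmt13_general V E ep em P hbip hsimple r s hr hs
end
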